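/- arXiv:1602.02195 — 2 statements merged into one kernel-verified Lean document; each statement's English description precedes it below -/
import Mathlib

section
/- If ψ is a Poisson endomorphism of A₁ with ψ(h) = γ ∈ ℂ* (a constant), then ψ(x) = 0, ψ(y) = 0, and γ is a common root of a(h) and a'(h), i.e., a root of a(h) of multiplicity > 1. Conversely, each such γ yields a unique zero-type Poisson endomorphism; if all roots of a(h) are simple there are no zero-type Poisson endomorphisms. -/
/- Common setup: the Poisson generalized Weyl algebra
   `A₁ = ℂ[h^{±1},x,y]/⟨xy - a(h)⟩` with Poisson bracket
   `{x,h} = hx`, `{y,h} = -hy`, `{y,x} = -a'(h)h`. -/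

noncomputable section
open LaurentPolynomial

/-- `ℂ[h^{±1}]`, the ring of complex Laurent polynomials in `h = T 1`. -/
abbrev L : Type := LaurentPolynomial ℂ

/-- The formal derivative `a'` of a Laurent polynomial `a`. -/
def lderiv (a : L) : L := Finsupp.sum (AddMonoidAlgebra.coeff a) fun n c => LaurentPolynomial.C ((n : ℂ) * c) * T (n - 1)

/-- Evaluation of a Laurent polynomial at a (nonzero) complex number `z`. -/
def leval (z : ℂ) (a : L) : ℂ := Finsupp.sum (AddMonoidAlgebra.coeff a) fun n c => c * z ^ n

/-- The Laurent polynomial `a(γ·h)`. -/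
def lscale (γ : ℂ) (a : L) : L := Finsupp.sum (AddMonoidAlgebra.coeff a) fun n c => LaurentPolynomial.C (c * γ ^ n) * T n

/-- The Laurent polynomial `a(γ·h⁻¹)`. -/
def lsubinv (γ : ℂ) (a : L) : L := Finsupp.sum (AddMonoidAlgebra.coeff a) fun n c => LaurentPolynomial.C (c * γ ^ n) * T (-n)

/-- `B₁ = ℂ[h^{±1}, x, y]` (commutative), with `x = X 0`, `y = X 1`. -/
abbrev B1 : Type := MvPolynomial (Fin 2) L

/-- The inclusion `ℂ[h^{±1}] → ℂ[h^{±1},x,y]`. -/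
def ih : L →+* B1 := MvPolynomial.C

/-- `h ∈ B₁`. -/
def Bh : B1 := ih (T 1)
/-- `x ∈ B₁`. -/
def Bx : B1 := MvPolynomial.X 0
/-- `y ∈ B₁`. -/
def By : B1 := MvPolynomial.X 1

/-- The ideal `⟨xy - a(h)⟩` of `ℂ[h^{±1},x,y]`. -/
def GWI (a : L) : Ideal B1 := Ideal.span {Bx * By - ih a}

/-- The Poisson generalized Weyl algebra `A₁ = ℂ[h^{±1},x,y]/⟨xy - a(h)⟩`, as a
commutative ℂ-algebra. -/
abbrev GW (a : L) : Type := B1 ⧸ GWI a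

/-- The canonical projection `B₁ → A₁`. -/
def gp (a : L) : B1 →+* GW a := Ideal.Quotient.mk (GWI a)
/-- `h ∈ A₁`. -/
def gH (a : L) : GW a := gp a Bh
/-- `x ∈ A₁`. -/
def gX (a : L) : GW a := gp a Bx
/-- `y ∈ A₁`. -/
def gY (a : L) : GW a := gp a By
/-- `h^i ∈ A₁`, for `i : ℤ`. -/
def gHp (a : L) (i : ℤ) : GW a := gp a (ih (T i))

/-- `β` is a Poisson bracket on the commutative ℂ-algebra `A`: ℂ-bilinear (via
linearity in the first argument together with antisymmetry), antisymmetric,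
satisfying the Leibniz rule and the Jacobi identity. -/
def IsPoissonBracket {A : Type} [CommRing A] [Algebra ℂ A] (β : A → A → A) : Prop :=
  (∀ (r : ℂ) (u v w : A), β (r • u + v) w = r • β u w + β v w) ∧
  (∀ u v : A, β u v = - β v u) ∧
  (∀ u v w : A, β (u * v) w = u * β v w + β u w * v) ∧
  (∀ u v w : A, β u (β v w) + β v (β w u) + β w (β u v) = 0)

/-- `β` is the Poisson bracket of the Poisson generalized Weyl algebra `A₁`,
determined by `{x,h} = hx`, `{y,h} = -hy`, `{y,x} = -a'(h)h`. -/
def IsGWBracket (a : L) (β : GW a → GW a → GW a) : Prop :=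
  IsPoissonBracket β ∧
  β (gX a) (gH a) = gH a * gX a ∧
  β (gY a) (gH a) = -(gH a * gY a) ∧
  β (gY a) (gX a) = -(gp a (ih (lderiv a)) * gH a)

/-- The homogeneous component `W_k` of `A₁`: `ℂ[h^{±1}]x^k` for `k > 0`,
`ℂ[h^{±1}]` for `k = 0`, and `ℂ[h^{±1}]y^{-k}` for `k < 0`; namely the ℂ-span of
the elements `h^m x^k` (resp. `h^m`, `h^m y^{-k}`) for `m ∈ ℤ`. -/
def W (a : L) (k : ℤ) : Submodule ℂ (GW a) :=
  Submodule.span ℂ {w | ∃ m : ℤ, w = gHp a m *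
    (if 0 ≤ k then gX a ^ k.toNat else gY a ^ (-k).toNat)}

/-!
If `ψ(h) = γ ∈ ℂ*`, applying `ψ` to `{x,h} = hx` gives `γ ψ(x) = {ψ(x), γ} = 0`, so `ψ(x) = 0`;
likewise `ψ(y) = 0`. Then `a(γ) = ψ(xy) = 0` and `-a'(γ)γ = ψ{y,x} = {0,0} = 0`.

Conversely, if `a(γ) = a'(γ) = 0`, let `χ : A₁ → ℂ` be evaluation at the point `(γ, 0, 0)` of
`xy = a(h)` and `ψ = ι ∘ χ` with `ι : ℂ → A₁`. Both sides of `ψ{u,v} = {ψu, ψv}` vanish: the right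
one is a bracket of scalars, and `χ{u,v}` is a derivation along `χ` in each argument, so it
vanishes once it vanishes on pairs of the generators `h, x, y`, where it is `χ(hx)`, `χ(hy)` or
`-χ(a'(h)h)`. Uniqueness holds because `ψ` is determined by `ψ(h), ψ(x), ψ(y)`.
-/

theorem LaurentPolynomial.algHom_ext {R B : Type*} [CommSemiring R] [Semiring B] [Algebra R B]
    {f g : R[T;T⁻¹] →ₐ[R] B} (h : f (T 1) = g (T 1)) : f = g :=
  (AddMonoidAlgebra.lift R B ℤ).symm.injective (MonoidHom.ext_mint h)

def levalAlgHom (γ : ℂ) (hγ : γ ≠ 0) : L →ₐ[ℂ] ℂ :=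
  AddMonoidAlgebra.lift ℂ ℂ ℤ ((Units.coeHom ℂ).comp (zpowersHom ℂˣ (Units.mk0 γ hγ)))

theorem levalAlgHom_apply (γ : ℂ) (hγ : γ ≠ 0) (p : L) :
    levalAlgHom γ hγ p = leval γ p := by
  simp [levalAlgHom, AddMonoidAlgebra.lift_apply, _root_.leval]

theorem levalAlgHom_T_one (γ : ℂ) (hγ : γ ≠ 0) : levalAlgHom γ hγ (T 1) = γ := by
  rw [T, levalAlgHom, AddMonoidAlgebra.lift_single]
  simp

structure IsDerivationAlong (R : Type*) {A B : Type*} [CommSemiring R] [Semiring A] [Algebra R A]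
    [Semiring B] (φ : A → B) (D : A → B) : Prop where
  map_add : ∀ u v, D (u + v) = D u + D v
  map_algebraMap : ∀ r : R, D (algebraMap R A r) = 0
  leibniz : ∀ u v, D (u * v) = φ u * D v + D u * φ v

namespace IsDerivationAlong

variable {R A B : Type*} [CommSemiring R] [Semiring B]

theorem eq_zero_of_adjoin_eq_top [Semiring A] [Algebra R A] {φ : A → B} {D : A → B}
    (hD : IsDerivationAlong R φ D) {s : Set A} (hs : Algebra.adjoin R s = ⊤)
    (hsD : ∀ g ∈ s, D g = 0) (u : A) : D u = 0 := by
  have hu : u ∈ Algebra.adjoin R s := hs ▸ Algebra.mem_top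
  induction hu using Algebra.adjoin_induction with
  | mem g hg => exact hsD g hg
  | algebraMap r => exact hD.map_algebraMap r
  | add u v _ _ hu hv => rw [hD.map_add, hu, hv, add_zero]
  | mul u v _ _ hu hv => rw [hD.leibniz, hu, hv, mul_zero, zero_mul, add_zero]

theorem map_eq_zero_of_mul_eq_one [CommSemiring A] [Algebra R A] {φ : A →* B} {D : A → B}
    (hD : IsDerivationAlong R φ D) {u w : A} (huw : u * w = 1) (hu : D u = 0) : D w = 0 := by
  have hone : D 1 = 0 := by simpa using hD.map_algebraMap 1
  calc D w = φ (w * u) * D w := by rw [mul_comm, huw, map_one, one_mul]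
    _ = φ w * D (u * w) := by rw [hD.leibniz, hu, zero_mul, add_zero, map_mul, mul_assoc]
    _ = 0 := by rw [huw, hone, mul_zero]

end IsDerivationAlong

namespace IsPoissonBracket

variable {A : Type} [CommRing A] [Algebra ℂ A] {β : A → A → A}

theorem add_left (hP : IsPoissonBracket β) (u v w : A) : β (u + v) w = β u w + β v w := by
  simpa using hP.1 1 u v w

theorem zero_left (hP : IsPoissonBracket β) (w : A) : β 0 w = 0 := by
  simpa using hP.add_left 0 0 w

theorem smul_left (hP : IsPoissonBracket β) (r : ℂ) (u w : A) :
    β (r • u) w = r • β u w := by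
  simpa [hP.zero_left] using hP.1 r u 0 w

theorem one_left (hP : IsPoissonBracket β) (w : A) : β 1 w = 0 := by
  simpa using hP.2.2.1 1 1 w

theorem algebraMap_left (hP : IsPoissonBracket β) (r : ℂ) (w : A) :
    β (algebraMap ℂ A r) w = 0 := by
  rw [Algebra.algebraMap_eq_smul_one, hP.smul_left, hP.one_left, smul_zero]

theorem add_right (hP : IsPoissonBracket β) (u v w : A) : β w (u + v) = β w u + β w v := by
  rw [hP.2.1, hP.add_left, neg_add, ← hP.2.1, ← hP.2.1]

theorem mul_right (hP : IsPoissonBracket β) (u v w : A) :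
    β w (u * v) = u * β w v + β w u * v := by
  rw [hP.2.1, hP.2.2.1, hP.2.1 v, hP.2.1 u]
  ring

theorem algebraMap_right (hP : IsPoissonBracket β) (r : ℂ) (w : A) :
    β w (algebraMap ℂ A r) = 0 := by
  rw [hP.2.1, hP.algebraMap_left, neg_zero]

theorem self_eq_zero (hP : IsPoissonBracket β) (u : A) : β u u = 0 := by
  have h2 : (2 : ℂ) • β u u = 0 := by
    rw [two_smul]
    nth_rewrite 1 [hP.2.1]
    exact neg_add_cancel _
  exact (smul_eq_zero.mp h2).resolve_left two_ne_zero

variable {B : Type*} [Semiring B] [Algebra ℂ B]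

theorem isDerivationAlong_left (hP : IsPoissonBracket β) (χ : A →ₐ[ℂ] B) (v : A) :
    IsDerivationAlong ℂ χ fun u => χ (β u v) where
  map_add u w := by rw [hP.add_left, map_add]
  map_algebraMap r := by rw [hP.algebraMap_left, map_zero]
  leibniz u w := by rw [hP.2.2.1, map_add, map_mul, map_mul]

theorem isDerivationAlong_right (hP : IsPoissonBracket β) (χ : A →ₐ[ℂ] B) (u : A) :
    IsDerivationAlong ℂ χ fun v => χ (β u v) where
  map_add v w := by rw [hP.add_right, map_add]
  map_algebraMap r := by rw [hP.algebraMap_right, map_zero]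
  leibniz v w := by rw [hP.mul_right, map_add, map_mul, map_mul]

end IsPoissonBracket

namespace GW

variable {a : L}

variable (a) in
def ofLaurent : L →ₐ[ℂ] GW a :=
  (Ideal.Quotient.mkₐ ℂ (GWI a)).comp (IsScalarTower.toAlgHom ℂ L B1)

theorem gp_ih (p : L) : gp a (ih p) = ofLaurent a p := rfl

theorem ofLaurent_T_one : ofLaurent a (T 1) = gH a := rfl

theorem gX_mul_gY : gX a * gY a = ofLaurent a a :=
  Ideal.Quotient.eq.2 (Ideal.subset_span rfl)

theorem gH_mul_gHp_neg_one : gH a * gHp a (-1) = 1 := by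
  rw [← ofLaurent_T_one, gHp, gp_ih, ← map_mul, ← T_add, add_neg_cancel, T_zero, map_one]

variable (a) in
def toLaurent : GW a →+* L :=
  Ideal.Quotient.lift (GWI a) (MvPolynomial.eval₂Hom (RingHom.id L) ![a, 1]) fun b hb => by
    refine (Ideal.span_singleton_le_iff_mem (RingHom.ker _)).mpr ?_ hb
    simp [Bx, By, ih]

instance : Nontrivial (GW a) := (toLaurent a).domain_nontrivial

theorem algHom_ext {B : Type*} [CommSemiring B] [Algebra ℂ B] {f g : GW a →ₐ[ℂ] B}
    (hH : f (gH a) = g (gH a)) (hX : f (gX a) = g (gX a)) (hY : f (gY a) = g (gY a)) : f = g :=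
  Ideal.Quotient.algHom_ext ℂ <| MvPolynomial.algHom_ext' (LaurentPolynomial.algHom_ext hH)
    fun i => by fin_cases i <;> assumption

variable (a) in
theorem adjoin_eq_top : Algebra.adjoin ℂ {gH a, gHp a (-1), gX a, gY a} = ⊤ := by
  set S := Algebra.adjoin ℂ {gH a, gHp a (-1), gX a, gY a}
  have hT (n : ℤ) : ofLaurent a (T n) ∈ S := by
    induction n using Int.induction_on with
    | zero => rw [T_zero, map_one]; exact S.one_mem
    | succ k ih =>
      rw [T_add, map_mul]
      exact S.mul_mem ih (Algebra.subset_adjoin (by simp [ofLaurent_T_one]))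
    | pred k ih =>
      rw [sub_eq_add_neg, T_add, map_mul]
      exact S.mul_mem ih (Algebra.subset_adjoin (by simp [gHp, gp_ih]))
  have hL (p : L) : ofLaurent a p ∈ S := by
    induction p using LaurentPolynomial.induction_on' with
    | add p q hp hq => rw [map_add]; exact S.add_mem hp hq
    | C_mul_T n c =>
      rw [map_mul, C_eq_algebraMap, AlgHom.commutes]
      exact S.mul_mem (S.algebraMap_mem c) (hT n)
  refine eq_top_iff.mpr ?_
  rintro u -
  obtain ⟨b, rfl⟩ := Ideal.Quotient.mk_surjective u
  induction b using MvPolynomial.induction_on with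
  | C p => exact hL p
  | add p q hp hq => rw [map_add]; exact S.add_mem hp hq
  | mul_X q i hq =>
    rw [map_mul]
    refine S.mul_mem hq (Algebra.subset_adjoin ?_)
    fin_cases i
    · exact Or.inr (Or.inr (Or.inl rfl))
    · exact Or.inr (Or.inr (Or.inr rfl))

theorem eq_zero_of_isDerivationAlong {B : Type*} [Semiring B] {φ : GW a →* B} {D : GW a → B}
    (hD : IsDerivationAlong ℂ φ D) (hH : D (gH a) = 0) (hX : D (gX a) = 0) (hY : D (gY a) = 0)
    (u : GW a) : D u = 0 := by
  refine hD.eq_zero_of_adjoin_eq_top (adjoin_eq_top a) ?_ u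
  rintro g (rfl | rfl | rfl | rfl)
  exacts [hH, hD.map_eq_zero_of_mul_eq_one gH_mul_gHp_neg_one hH, hX, hY]

theorem map_ofLaurent {B : Type*} [Semiring B] [Algebra ℂ B] (f : GW a →ₐ[ℂ] B) {γ : ℂ}
    (hγ : γ ≠ 0) (hf : f (gH a) = algebraMap ℂ B γ) (p : L) :
    f (ofLaurent a p) = algebraMap ℂ B (leval γ p) := by
  have hcomp : f.comp (ofLaurent a) = (Algebra.ofId ℂ B).comp (levalAlgHom γ hγ) :=
    LaurentPolynomial.algHom_ext (by simpa [ofLaurent_T_one, levalAlgHom_T_one] using hf)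
  simpa [levalAlgHom_apply] using DFunLike.congr_fun hcomp p

theorem map_bracket_eq_zero {β : GW a → GW a → GW a} (hP : IsPoissonBracket β)
    {B : Type*} [Ring B] [Algebra ℂ B] (χ : GW a →ₐ[ℂ] B)
    (hXH : χ (β (gX a) (gH a)) = 0) (hYH : χ (β (gY a) (gH a)) = 0)
    (hYX : χ (β (gY a) (gX a)) = 0) (u v : GW a) : χ (β u v) = 0 := by
  have swap {u v : GW a} (h : χ (β u v) = 0) : χ (β v u) = 0 := by
    rw [hP.2.1, map_neg, h, neg_zero]
  have self (u : GW a) : χ (β u u) = 0 := by rw [hP.self_eq_zero, map_zero]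
  have right (g : GW a) := eq_zero_of_isDerivationAlong (hP.isDerivationAlong_right χ g)
  have hH := right (gH a) (self _) (swap hXH) (swap hYH)
  have hX := right (gX a) hXH (self _) (swap hYX)
  have hY := right (gY a) hYH hYX (self _)
  exact eq_zero_of_isDerivationAlong (hP.isDerivationAlong_left χ v) (hH v) (hX v) (hY v) u

theorem zeroType_of_isPoisson {β : GW a → GW a → GW a} (hβ : IsGWBracket a β)
    {ψ : GW a →ₐ[ℂ] GW a} (hψ : ∀ u v, ψ (β u v) = β (ψ u) (ψ v))
    {γ : ℂ} (hγ : γ ≠ 0) (hh : ψ (gH a) = algebraMap ℂ (GW a) γ) :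
    ψ (gX a) = 0 ∧ ψ (gY a) = 0 ∧ leval γ a = 0 ∧ leval γ (lderiv a) = 0 := by
  obtain ⟨hP, hXH, hYH, hYX⟩ := hβ
  have hx : ψ (gX a) = 0 := by
    have h := hψ (gX a) (gH a)
    rw [hXH, hh, hP.algebraMap_right, map_mul, hh, ← Algebra.smul_def] at h
    exact (smul_eq_zero.mp h).resolve_left hγ
  have hy : ψ (gY a) = 0 := by
    have h := hψ (gY a) (gH a)
    rw [hYH, hh, hP.algebraMap_right, map_neg, map_mul, hh, ← Algebra.smul_def, neg_eq_zero] at h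
    exact (smul_eq_zero.mp h).resolve_left hγ
  have ha : leval γ a = 0 := by
    have h : ψ (gX a * gY a) = 0 := by rw [map_mul, hx, zero_mul]
    rwa [gX_mul_gY, map_ofLaurent ψ hγ hh, FaithfulSMul.algebraMap_eq_zero_iff] at h
  have hd : leval γ (lderiv a) = 0 := by
    have h := hψ (gY a) (gX a)
    rw [hYX, hy, hP.zero_left, map_neg, map_mul, gp_ih, map_ofLaurent ψ hγ hh, hh, ← map_mul,
      neg_eq_zero, FaithfulSMul.algebraMap_eq_zero_iff] at h
    exact (mul_eq_zero.mp h).resolve_right hγ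
  exact ⟨hx, hy, ha, hd⟩

def evalAt (γ : ℂ) (hγ : γ ≠ 0) (ha : leval γ a = 0) : GW a →ₐ[ℂ] ℂ :=
  Ideal.Quotient.liftₐ (GWI a) (MvPolynomial.aevalTower (levalAlgHom γ hγ) 0) fun b hb => by
    refine (Ideal.span_singleton_le_iff_mem (RingHom.ker _)).mpr ?_ hb
    simp [Bx, By, ih, levalAlgHom_apply, ha]

variable {γ : ℂ} {hγ : γ ≠ 0} {ha : leval γ a = 0}

theorem evalAt_gp (b : B1) :
    evalAt γ hγ ha (gp a b) = MvPolynomial.aevalTower (levalAlgHom γ hγ) 0 b :=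
  Ideal.Quotient.lift_mk _ _ _

theorem evalAt_gH : evalAt γ hγ ha (gH a) = γ := by
  rw [gH, evalAt_gp, Bh, ih, MvPolynomial.aevalTower_C, levalAlgHom_T_one]

theorem evalAt_gX : evalAt γ hγ ha (gX a) = 0 := by
  rw [gX, evalAt_gp, Bx, MvPolynomial.aevalTower_X, Pi.zero_apply]

theorem evalAt_gY : evalAt γ hγ ha (gY a) = 0 := by
  rw [gY, evalAt_gp, By, MvPolynomial.aevalTower_X, Pi.zero_apply]

def zeroTypeEndo (γ : ℂ) (hγ : γ ≠ 0) (ha : leval γ a = 0) : GW a →ₐ[ℂ] GW a :=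
  (Algebra.ofId ℂ (GW a)).comp (evalAt γ hγ ha)

theorem zeroTypeEndo_gH : zeroTypeEndo γ hγ ha (gH a) = algebraMap ℂ (GW a) γ := by
  rw [zeroTypeEndo, AlgHom.comp_apply, evalAt_gH, Algebra.ofId_apply]

theorem zeroTypeEndo_gX : zeroTypeEndo γ hγ ha (gX a) = 0 := by
  rw [zeroTypeEndo, AlgHom.comp_apply, evalAt_gX, map_zero]

theorem zeroTypeEndo_gY : zeroTypeEndo γ hγ ha (gY a) = 0 := by
  rw [zeroTypeEndo, AlgHom.comp_apply, evalAt_gY, map_zero]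

theorem zeroTypeEndo_map_bracket {β : GW a → GW a → GW a} (hβ : IsGWBracket a β)
    (hd : leval γ (lderiv a) = 0) (u v : GW a) :
    zeroTypeEndo γ hγ ha (β u v) = β (zeroTypeEndo γ hγ ha u) (zeroTypeEndo γ hγ ha v) := by
  obtain ⟨hP, hXH, hYH, hYX⟩ := hβ
  have hbracket : evalAt γ hγ ha (β u v) = 0 := by
    refine map_bracket_eq_zero hP _ ?_ ?_ ?_ u v
    · rw [hXH, map_mul, evalAt_gX, mul_zero]
    · rw [hYH, map_neg, map_mul, evalAt_gY, mul_zero, neg_zero]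
    · rw [hYX, map_neg, map_mul, gp_ih,
        map_ofLaurent _ hγ (evalAt_gH : evalAt γ hγ ha _ = γ), hd, map_zero, zero_mul, neg_zero]
  simp only [zeroTypeEndo, AlgHom.comp_apply, Algebra.ofId_apply, hbracket, map_zero,
    hP.algebraMap_left]

end GW

theorem GW_zero_type_general (a : L)
    (β : GW a → GW a → GW a) (hβ : IsGWBracket a β) :
    (∀ ψ : GW a →ₐ[ℂ] GW a, (∀ u v : GW a, ψ (β u v) = β (ψ u) (ψ v)) →
      ∀ γ : ℂ, γ ≠ 0 → ψ (gH a) = algebraMap ℂ (GW a) γ →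
        ψ (gX a) = 0 ∧ ψ (gY a) = 0 ∧ leval γ a = 0 ∧ leval γ (lderiv a) = 0) ∧
    (∀ γ : ℂ, γ ≠ 0 → leval γ a = 0 → leval γ (lderiv a) = 0 →
      ∃! ψ : GW a →ₐ[ℂ] GW a, (∀ u v : GW a, ψ (β u v) = β (ψ u) (ψ v)) ∧
        ψ (gH a) = algebraMap ℂ (GW a) γ) ∧
    ((∀ γ : ℂ, γ ≠ 0 → leval γ a = 0 → leval γ (lderiv a) ≠ 0) →
      ∀ ψ : GW a →ₐ[ℂ] GW a, (∀ u v : GW a, ψ (β u v) = β (ψ u) (ψ v)) →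
        ∀ γ : ℂ, γ ≠ 0 → ψ (gH a) ≠ algebraMap ℂ (GW a) γ) := by
  refine ⟨fun _ hψ _ hγ hh => GW.zeroType_of_isPoisson hβ hψ hγ hh,
    fun γ hγ ha hd => ⟨GW.zeroTypeEndo γ hγ ha,
      ⟨GW.zeroTypeEndo_map_bracket hβ hd, GW.zeroTypeEndo_gH⟩, ?_⟩, ?_⟩
  · rintro ψ ⟨hψ, hh⟩
    obtain ⟨hx, hy, -, -⟩ := GW.zeroType_of_isPoisson hβ hψ hγ hh
    refine GW.algHom_ext (B := GW a) ?_ ?_ ?_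
    · rw [hh, GW.zeroTypeEndo_gH]
    · rw [hx, GW.zeroTypeEndo_gX]
    · rw [hy, GW.zeroTypeEndo_gY]
  · intro hsimple ψ hψ γ hγ hh
    obtain ⟨-, -, ha, hd⟩ := GW.zeroType_of_isPoisson hβ hψ hγ hh
    exact hsimple γ hγ ha hd

/-- (Zero type.) If `ψ` is a Poisson endomorphism of `A₁` with
`ψ(h) = γ ∈ ℂ*` then `ψ(x) = 0`, `ψ(y) = 0`, and `γ` is a common root of `a`
and `a'`, i.e. a root of `a` of multiplicity `> 1`.  Conversely each such `γ`
yields a unique zero-type Poisson endomorphism; if all roots of `a` are simple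
there are no zero-type Poisson endomorphisms. -/
theorem GW_zero_type (a : L) (ha : a ≠ 0) (hnu : ¬ IsUnit a)
    (β : GW a → GW a → GW a) (hβ : IsGWBracket a β) :
    (∀ ψ : GW a →ₐ[ℂ] GW a, (∀ u v : GW a, ψ (β u v) = β (ψ u) (ψ v)) →
      ∀ γ : ℂ, γ ≠ 0 → ψ (gH a) = algebraMap ℂ (GW a) γ →
        ψ (gX a) = 0 ∧ ψ (gY a) = 0 ∧ leval γ a = 0 ∧ leval γ (lderiv a) = 0) ∧
    (∀ γ : ℂ, γ ≠ 0 → leval γ a = 0 → leval γ (lderiv a) = 0 →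
      ∃! ψ : GW a →ₐ[ℂ] GW a, (∀ u v : GW a, ψ (β u v) = β (ψ u) (ψ v)) ∧
        ψ (gH a) = algebraMap ℂ (GW a) γ) ∧
    ((∀ γ : ℂ, γ ≠ 0 → leval γ a = 0 → leval γ (lderiv a) ≠ 0) →
      ∀ ψ : GW a →ₐ[ℂ] GW a, (∀ u v : GW a, ψ (β u v) = β (ψ u) (ψ v)) →
        ∀ γ : ℂ, γ ≠ 0 → ψ (gH a) ≠ algebraMap ℂ (GW a) γ) :=
  GW_zero_type_general a β hβ
end
end

section
/- A Poisson endomorphism ψ of A₁ with ψ(h) = γh for γ ∈ ℂ*, ψ(x) = b(h)x, ψ(y) = c(h)y must satisfy b(h)c(h)a(h) = a(γh) in ℂ[h^{±1}]; comparing top and bottom degrees forces b(h) = bh^n and c(h) = γ^d b^{-1} h^{-n} for some b ∈ ℂ*, n ∈ ℤ, and γ^{d−i_j} = 1 for every exponent i_j of a(h). -/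
/- Common setup: the Poisson generalized Weyl algebra
   `A₁ = ℂ[h^{±1},x,y]/⟨xy - a(h)⟩` with Poisson bracket
   `{x,h} = hx`, `{y,h} = -hy`, `{y,x} = -a'(h)h`. -/

noncomputable section
open LaurentPolynomial

/-!
Applying the algebra map `ψ` to `xy = a(h)` gives `b(h)c(h)a(h) = a(γh)` in `A₁`, and this identity
already holds in `ℂ[h^{±1}]`, since `ℂ[h^{±1}] → A₁` has the retraction `x ↦ 1`, `y ↦ a`.
Top and bottom degrees of Laurent polynomials over a domain add under multiplication, and `a(h)`,
`a(γh)` share both; so `deg b + deg c = 0` at both ends, which forces `b = b₀hⁿ` and `c = c₀h⁻ⁿ`.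
Then `b₀c₀ a_i = a_i γ^i` for every exponent `i` of `a`, so `b₀c₀ = γ^i = γ^d`.
-/

namespace LaurentPolynomial

variable {R : Type*}

section Semiring

variable [Semiring R]

theorem coeff_C_mul_T (r : R) (n k : ℤ) : (C r * T n).coeff k = if n = k then r else 0 := by
  rw [← single_eq_C_mul_T]
  exact Finsupp.single_apply

def IsTopDegree (p : R[T;T⁻¹]) (d : ℤ) : Prop :=
  p.coeff d ≠ 0 ∧ ∀ k, d < k → p.coeff k = 0

def IsBottomDegree (p : R[T;T⁻¹]) (e : ℤ) : Prop :=
  p.coeff e ≠ 0 ∧ ∀ k, k < e → p.coeff k = 0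

theorem exists_isTopDegree {p : R[T;T⁻¹]} (hp : p ≠ 0) : ∃ d, IsTopDegree p d := by
  have hne : p.coeff.support.Nonempty := by
    rwa [Finsupp.support_nonempty_iff, Ne, ← AddMonoidAlgebra.coeff_zero,
      AddMonoidAlgebra.coeff_inj]
  refine ⟨p.coeff.support.max' hne, Finsupp.mem_support_iff.mp (p.coeff.support.max'_mem hne),
    fun k hk => ?_⟩
  by_contra h
  exact hk.not_ge (p.coeff.support.le_max' k (Finsupp.mem_support_iff.mpr h))

theorem IsTopDegree.unique {p : R[T;T⁻¹]} {d d' : ℤ} (h : IsTopDegree p d)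
    (h' : IsTopDegree p d') : d = d' := by
  by_contra hne
  rcases lt_or_gt_of_ne hne with hlt | hgt
  · exact h'.1 (h.2 d' hlt)
  · exact h.1 (h'.2 d hgt)

theorem IsBottomDegree.le {p : R[T;T⁻¹]} {e d : ℤ} (hb : IsBottomDegree p e)
    (ht : IsTopDegree p d) : e ≤ d :=
  not_lt.mp fun h => hb.1 (ht.2 e h)

theorem eq_C_mul_T_of_isTopDegree_of_isBottomDegree {p : R[T;T⁻¹]} {n : ℤ}
    (ht : IsTopDegree p n) (hb : IsBottomDegree p n) : p = C (p.coeff n) * T n := by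
  ext k
  rw [coeff_C_mul_T]
  rcases lt_trichotomy k n with h | rfl | h
  · rw [hb.2 k h, if_neg h.ne']
  · rw [if_pos rfl]
  · rw [ht.2 k h, if_neg h.ne]

theorem IsTopDegree.mul [NoZeroDivisors R] {p q : R[T;T⁻¹]} {dp dq : ℤ} (hp : IsTopDegree p dp)
    (hq : IsTopDegree q dq) : IsTopDegree (p * q) (dp + dq) := by
  classical
  have le_of_mem {r : R[T;T⁻¹]} {d i : ℤ} (hr : IsTopDegree r d) (hi : i ∈ r.coeff.support) :
      i ≤ d :=
    not_lt.mp fun h => Finsupp.mem_support_iff.mp hi (hr.2 i h)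
  refine ⟨?_, fun k hk => ?_⟩
  · -- only the pair `(dp, dq)` of exponents reaches `dp + dq`
    rw [AddMonoidAlgebra.coeff_mul, Finsupp.sum, Finset.sum_eq_single dp]
    · rw [Finsupp.sum, Finset.sum_eq_single dq, if_pos rfl]
      · exact mul_ne_zero hp.1 hq.1
      · intro j hj hne
        exact if_neg fun h => hne (by omega)
      · intro h
        rw [Finsupp.notMem_support_iff.mp h, mul_zero, ite_self]
    · intro i hi hne
      exact Finset.sum_eq_zero fun j hj =>
        if_neg fun h => by have := le_of_mem hp hi; have := le_of_mem hq hj; omega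
    · intro h
      simp [Finsupp.notMem_support_iff.mp h]
  · by_contra h
    obtain ⟨i, hi, j, hj, rfl⟩ := Finset.mem_add.mp
      (AddMonoidAlgebra.support_coeff_mul_subset p q (Finsupp.mem_support_iff.mpr h))
    have := le_of_mem hp hi
    have := le_of_mem hq hj
    omega

end Semiring

section CommSemiring

variable [CommSemiring R]

theorem isBottomDegree_iff_isTopDegree_invert {p : R[T;T⁻¹]} {e : ℤ} :
    IsBottomDegree p e ↔ IsTopDegree (invert p) (-e) := by
  simp only [IsBottomDegree, IsTopDegree, invert_apply, neg_neg]
  refine and_congr_right' ⟨fun h k hk => h (-k) (by omega), fun h k hk => ?_⟩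
  simpa using h (-k) (by omega)

theorem exists_isBottomDegree {p : R[T;T⁻¹]} (hp : p ≠ 0) : ∃ e, IsBottomDegree p e := by
  obtain ⟨d, hd⟩ := exists_isTopDegree (EmbeddingLike.map_ne_zero_iff.mpr hp : invert p ≠ 0)
  exact ⟨-d, isBottomDegree_iff_isTopDegree_invert.mpr (by rwa [neg_neg])⟩

theorem IsBottomDegree.unique {p : R[T;T⁻¹]} {e e' : ℤ} (h : IsBottomDegree p e)
    (h' : IsBottomDegree p e') : e = e' :=
  neg_inj.mp ((isBottomDegree_iff_isTopDegree_invert.mp h).unique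
    (isBottomDegree_iff_isTopDegree_invert.mp h'))

theorem IsBottomDegree.mul [NoZeroDivisors R] {p q : R[T;T⁻¹]} {ep eq : ℤ}
    (hp : IsBottomDegree p ep) (hq : IsBottomDegree q eq) : IsBottomDegree (p * q) (ep + eq) := by
  rw [isBottomDegree_iff_isTopDegree_invert] at hp hq ⊢
  rw [map_mul, neg_add]
  exact hp.mul hq

theorem exists_eq_C_mul_T_of_mul_mul [NoZeroDivisors R] {a b c : R[T;T⁻¹]} (hb : b ≠ 0)
    (hc : c ≠ 0) {d e : ℤ} (hta : IsTopDegree a d) (hba : IsBottomDegree a e)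
    (ht : IsTopDegree (b * c * a) d) (hbot : IsBottomDegree (b * c * a) e) :
    ∃ n, b = C (b.coeff n) * T n ∧ c = C (c.coeff (-n)) * T (-n) := by
  obtain ⟨db, htb⟩ := exists_isTopDegree hb
  obtain ⟨eb, hbb⟩ := exists_isBottomDegree hb
  obtain ⟨dc, htc⟩ := exists_isTopDegree hc
  obtain ⟨ec, hbc⟩ := exists_isBottomDegree hc
  have htop : db + dc + d = d := ((htb.mul htc).mul hta).unique ht
  have hbottom : eb + ec + e = e := ((hbb.mul hbc).mul hba).unique hbot
  have hb_le := hbb.le htb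
  have hc_le := hbc.le htc
  obtain rfl : eb = db := by omega
  obtain rfl : dc = -eb := by omega
  obtain rfl : ec = -eb := by omega
  exact ⟨eb, eq_C_mul_T_of_isTopDegree_of_isBottomDegree htb hbb,
    eq_C_mul_T_of_isTopDegree_of_isBottomDegree htc hbc⟩

end CommSemiring

end LaurentPolynomial

theorem coeff_lscale (γ : ℂ) (a : L) (k : ℤ) : (lscale γ a).coeff k = a.coeff k * γ ^ k := by
  classical
  simp only [lscale, Finsupp.sum, AddMonoidAlgebra.coeff_sum, Finset.sum_apply', coeff_C_mul_T,
    Finset.sum_ite_eq', Finsupp.mem_support_iff, ne_eq, ite_not]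
  split_ifs with h <;> simp [h]

theorem lscale_add (γ : ℂ) (p q : L) : lscale γ (p + q) = lscale γ p + lscale γ q := by
  ext k
  simp only [coeff_lscale, AddMonoidAlgebra.coeff_add, Finsupp.add_apply, add_mul]

theorem lscale_C_mul_T (γ r : ℂ) (n : ℤ) : lscale γ (C r * T n) = C (r * γ ^ n) * T n := by
  ext k
  rw [coeff_lscale, coeff_C_mul_T, coeff_C_mul_T]
  split_ifs with h <;> simp [h]

theorem LaurentPolynomial.IsTopDegree.lscale {γ : ℂ} (hγ : γ ≠ 0) {a : L} {d : ℤ}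
    (h : IsTopDegree a d) : IsTopDegree (lscale γ a) d :=
  ⟨by rw [coeff_lscale]; exact mul_ne_zero h.1 (zpow_ne_zero _ hγ),
    fun k hk => by rw [coeff_lscale, h.2 k hk, zero_mul]⟩

theorem LaurentPolynomial.IsBottomDegree.lscale {γ : ℂ} (hγ : γ ≠ 0) {a : L} {e : ℤ}
    (h : IsBottomDegree a e) : IsBottomDegree (lscale γ a) e :=
  ⟨by rw [coeff_lscale]; exact mul_ne_zero h.1 (zpow_ne_zero _ hγ),
    fun k hk => by rw [coeff_lscale, h.2 k hk, zero_mul]⟩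

theorem eq_zpow_of_C_mul_eq_lscale {γ r : ℂ} {a : L} (h : C r * a = lscale γ a) {i : ℤ}
    (hi : a.coeff i ≠ 0) : r = γ ^ i := by
  have := congr_arg (fun p : L => p.coeff i) h
  simp only [← smul_eq_C_mul, AddMonoidAlgebra.coeff_smul, Finsupp.smul_apply, smul_eq_mul,
    coeff_lscale, mul_comm _ (γ ^ i)] at this
  exact mul_right_cancel₀ hi this

theorem gX_mul_gY (a : L) : gX a * gY a = gp a (ih a) := by
  rw [gX, gY, gp, ← map_mul]
  exact Ideal.Quotient.eq.mpr (Ideal.mem_span_singleton_self _)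

def GW.retraction (a : L) : GW a →+* L :=
  Ideal.Quotient.lift (GWI a) (MvPolynomial.eval₂Hom (RingHom.id L) ![1, a]) fun u hu => by
    obtain ⟨v, rfl⟩ := Ideal.mem_span_singleton'.mp hu
    simp [Bx, By, ih]

theorem gp_comp_ih_injective (a : L) : Function.Injective ((gp a).comp ih) :=
  Function.LeftInverse.injective (g := GW.retraction a) fun q => by
    simp [GW.retraction, gp, ih]

section Endomorphism

variable {a : L} {ψ : GW a →ₐ[ℂ] GW a} {γ : ℂ}

theorem map_gp_ih_T (hγ : γ ≠ 0) (hψh : ψ (gH a) = γ • gH a) (n : ℤ) :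
    ψ (gp a (ih (T n))) = γ ^ n • gp a (ih (T n)) := by
  have hT : ∀ m k : ℤ, gp a (ih (T (m + k))) = gp a (ih (T m)) * gp a (ih (T k)) := fun m k => by
    rw [T_add, map_mul, map_mul]
  have hinv : ψ (gp a (ih (T (-1)))) = γ⁻¹ • gp a (ih (T (-1))) := by
    have hunit : gH a * gp a (ih (T (-1))) = 1 := by
      rw [gH, Bh, ← hT, add_neg_cancel, T_zero, map_one, map_one]
    calc ψ (gp a (ih (T (-1))))
        = ψ (gp a (ih (T (-1)))) * (ψ (gH a) * (γ⁻¹ • gp a (ih (T (-1))))) := by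
          rw [hψh, smul_mul_smul_comm, mul_inv_cancel₀ hγ, hunit, one_smul, mul_one]
      _ = γ⁻¹ • gp a (ih (T (-1))) := by
          rw [← mul_assoc, ← map_mul, mul_comm _ (gH a), hunit, map_one, one_mul]
  have hh : gp a (ih (T 1)) = gH a := rfl
  induction n using Int.induction_on with
  | zero => simp [T_zero]
  | succ n hn => rw [hT, map_mul, hn, hh, hψh, smul_mul_smul_comm, zpow_add_one₀ hγ]
  | pred n hn =>
    rw [sub_eq_add_neg, hT, map_mul, hn, hinv, smul_mul_smul_comm, zpow_add₀ hγ, zpow_neg_one]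

theorem map_gp_ih (hγ : γ ≠ 0) (hψh : ψ (gH a) = γ • gH a) (q : L) :
    ψ (gp a (ih q)) = gp a (ih (lscale γ q)) := by
  induction q using LaurentPolynomial.induction_on' with
  | add p q hp hq => rw [map_add, map_add, map_add, hp, hq, lscale_add, map_add, map_add]
  | C_mul_T n r =>
    have hC : ∀ z : ℂ, gp a (ih (C z)) = algebraMap ℂ (GW a) z := fun _ => rfl
    rw [lscale_C_mul_T]
    simp only [map_mul, hC, AlgHom.commutes, map_gp_ih_T hγ hψh, mul_assoc]
    exact congr_arg _ (Algebra.smul_def (A := GW a) (γ ^ n) _)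

theorem mul_mul_eq_lscale (hγ : γ ≠ 0) (hψh : ψ (gH a) = γ • gH a) {b c : L}
    (hψx : ψ (gX a) = gp a (ih b) * gX a) (hψy : ψ (gY a) = gp a (ih c) * gY a) :
    b * c * a = lscale γ a := by
  apply gp_comp_ih_injective a
  change gp a (ih (b * c * a)) = gp a (ih (lscale γ a))
  rw [← map_gp_ih hγ hψh, ← gX_mul_gY, map_mul ψ, hψx, hψy]
  simp only [map_mul]
  rw [← gX_mul_gY]
  ring

end Endomorphism

theorem GW_positive_type_computation_general (a : L) (ha : a ≠ 0)
    (d : ℤ) (hd : ∀ i ∈ Finsupp.support (AddMonoidAlgebra.coeff a), i ≤ d) (hdmem : d ∈ Finsupp.support (AddMonoidAlgebra.coeff a))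
    (ψ : GW a →ₐ[ℂ] GW a)
    (γ : ℂ) (hγ : γ ≠ 0) (b c : L) (hb : b ≠ 0) (hc : c ≠ 0)
    (hψh : ψ (gH a) = γ • gH a)
    (hψx : ψ (gX a) = gp a (ih b) * gX a)
    (hψy : ψ (gY a) = gp a (ih c) * gY a) :
    b * c * a = lscale γ a ∧
    ∃ b₀ : ℂ, b₀ ≠ 0 ∧ ∃ n : ℤ,
      b = LaurentPolynomial.C b₀ * T n ∧
      c = LaurentPolynomial.C (γ ^ d * b₀⁻¹) * T (-n) ∧
      ∀ i ∈ Finsupp.support (AddMonoidAlgebra.coeff a), γ ^ (d - i) = 1 := by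
  have hbca := mul_mul_eq_lscale hγ hψh hψx hψy
  have hta : IsTopDegree a d :=
    ⟨Finsupp.mem_support_iff.mp hdmem, fun k hk => Finsupp.notMem_support_iff.mp
      fun hk' => (hd k hk').not_gt hk⟩
  obtain ⟨e, hba⟩ := exists_isBottomDegree ha
  obtain ⟨n, hbn, hcn⟩ := exists_eq_C_mul_T_of_mul_mul hb hc hta hba
    (hbca ▸ hta.lscale hγ) (hbca ▸ hba.lscale hγ)
  set b₀ := b.coeff n
  set c₀ := c.coeff (-n)
  have hb₀ : b₀ ≠ 0 := fun h => hb (by rw [hbn, h, map_zero, zero_mul])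
  have hbc : b * c = C (b₀ * c₀) := by
    rw [hbn, hcn, mul_mul_mul_comm, ← map_mul, ← T_add, add_neg_cancel, T_zero, mul_one]
  have hγi : ∀ i ∈ a.coeff.support, b₀ * c₀ = γ ^ i := fun i hi =>
    eq_zpow_of_C_mul_eq_lscale (hbc ▸ hbca) (Finsupp.mem_support_iff.mp hi)
  have hγd := hγi d hdmem
  refine ⟨hbca, b₀, hb₀, n, hbn, ?_, fun i hi => ?_⟩
  · rw [hcn, ← hγd, mul_comm b₀, mul_inv_cancel_right₀ hb₀]
  · rw [zpow_sub₀ hγ, ← hγd, hγi i hi, div_self (zpow_ne_zero _ hγ)]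

/-- A Poisson endomorphism `ψ` of `A₁` with `ψ(h) = γh`,
`ψ(x) = b(h)x`, `ψ(y) = c(h)y` must satisfy `b(h)c(h)a(h) = a(γh)` in
`ℂ[h^{±1}]`; comparing top and bottom degrees forces `b(h) = b₀h^n` and
`c(h) = γ^d b₀⁻¹ h^{-n}` for some `b₀ ∈ ℂ*`, `n ∈ ℤ`, and `γ^{d-i} = 1` for
every exponent `i` of `a`, where `d` is the top exponent of `a`. -/
theorem GW_positive_type_computation (a : L) (ha : a ≠ 0)
    (hm : 2 ≤ (Finsupp.support (AddMonoidAlgebra.coeff a)).card)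
    (d : ℤ) (hd : ∀ i ∈ Finsupp.support (AddMonoidAlgebra.coeff a), i ≤ d) (hdmem : d ∈ Finsupp.support (AddMonoidAlgebra.coeff a))
    (β : GW a → GW a → GW a) (hβ : IsGWBracket a β)
    (ψ : GW a →ₐ[ℂ] GW a) (hψ : ∀ u v : GW a, ψ (β u v) = β (ψ u) (ψ v))
    (γ : ℂ) (hγ : γ ≠ 0) (b c : L) (hb : b ≠ 0) (hc : c ≠ 0)
    (hψh : ψ (gH a) = γ • gH a)
    (hψx : ψ (gX a) = gp a (ih b) * gX a)
    (hψy : ψ (gY a) = gp a (ih c) * gY a) :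
    b * c * a = lscale γ a ∧
    ∃ b₀ : ℂ, b₀ ≠ 0 ∧ ∃ n : ℤ,
      b = LaurentPolynomial.C b₀ * T n ∧
      c = LaurentPolynomial.C (γ ^ d * b₀⁻¹) * T (-n) ∧
      ∀ i ∈ Finsupp.support (AddMonoidAlgebra.coeff a), γ ^ (d - i) = 1 :=
  GW_positive_type_computation_general a ha d hd hdmem ψ γ hγ b c hb hc hψh hψx hψy
end
end
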